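/- arXiv:math/0509678 — 6 statements merged into one kernel-verified Lean document; each statement's English description precedes it below -/
import Mathlib

section
/- For a, b ∈ IS_n, the sandwich semigroups (IS_n, *_a) and (IS_n, *_b) are isomorphic as semigroups if and only if rank(a) = rank(b). -/
/-!
The products `x a y` are exactly the elements of rank at most `rank a`: two partial injections
of equal rank differ by permutations on both sides, and every rank `≤ rank a` is attained by a
restriction `e a` of `a`, so any `z` with `rank z ≤ rank a` is `(g e) a h` for permutations
`g, h`. An isomorphism `(IS_n, *_a) ≅ (IS_n, *_b)` maps products onto products, so the sets of
elements of rank at most `rank a` and at most `rank b` have the same size, which forces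
`rank a = rank b`. Conversely, if `b = g a h` with permutations `g, h`, then `x ↦ h⁻¹ x g⁻¹`
is an isomorphism.
-/

open Equiv

/-- `IS n` : the symmetric inverse semigroup on `{1,…,n}`, modeled as partial
equivalences of `Fin n`.  Composition is left-to-right: `(x.trans y) t = y (x t)`. -/
abbrev IS (n : ℕ) := PEquiv (Fin n) (Fin n)

/-- The domain of a partial injective transformation. -/
def sdom {n : ℕ} (x : IS n) : Set (Fin n) := {a | (x a).isSome}

/-- The image of a partial injective transformation. -/
def sim {n : ℕ} (x : IS n) : Set (Fin n) := {b | (x.symm b).isSome}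

/-- The rank of a partial injective transformation: the cardinality of its image. -/
noncomputable def srank {n : ℕ} (x : IS n) : ℕ := Nat.card (sim x)

/-- The set `A = {1,…,k}` inside `Fin n`, i.e. the first `k` elements. -/
def SetA (n k : ℕ) : Set (Fin n) := {i | (i : ℕ) < k}

/-- The idempotent `e` acting identically on `A`, with `dom e = im e = A`. -/
def sandE (n k : ℕ) : IS n where
  toFun i := if (i : ℕ) < k then some i else none
  invFun i := if (i : ℕ) < k then some i else none
  inv a b := by
    split_ifs with h1 h2 <;>
      simp_all [Option.mem_def, eq_comm] <;> rintro rfl <;> omega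

/-- The sandwich multiplication `x * y = x e y` (left-to-right composition). -/
def smul (n k : ℕ) (x y : IS n) : IS n := (x.trans (sandE n k)).trans y

/-- The sandwich multiplication with an arbitrary sandwich element `a`. -/
def smulBy {n : ℕ} (a x y : IS n) : IS n := (x.trans a).trans y

instance PEquiv.instFinite {α β : Type*} [Finite α] [Finite β] : Finite (α ≃. β) :=
  Finite.of_injective (fun f : α ≃. β => (f : α → Option β)) DFunLike.coe_injective

theorem Equiv.image_range_uncurry_of_map {α β : Type*} (φ : α ≃ β) {f : α → α → α}
    {g : β → β → β} (hφ : ∀ x y, φ (f x y) = g (φ x) (φ y)) :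
    φ '' Set.range (Function.uncurry f) = Set.range (Function.uncurry g) := by
  have : φ ∘ Function.uncurry f = Function.uncurry g ∘ Prod.map φ φ :=
    funext fun _ => hφ _ _
  rw [← Set.range_comp, this, (φ.surjective.prodMap φ.surjective).range_comp]

@[simp]
theorem Equiv.toPEquiv_trans_symm {α β : Type*} (g : α ≃ β) :
    g.toPEquiv.trans g.symm.toPEquiv = PEquiv.refl α := by
  rw [← toPEquiv_trans, self_trans_symm, toPEquiv_refl]

@[simp]
theorem Equiv.symm_toPEquiv_trans {α β : Type*} (g : α ≃ β) :
    g.symm.toPEquiv.trans g.toPEquiv = PEquiv.refl β := by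
  rw [← toPEquiv_trans, symm_trans_self, toPEquiv_refl]

@[simp]
theorem Equiv.toPEquiv_trans_symm_trans {α β γ : Type*} (g : α ≃ β) (x : α ≃. γ) :
    g.toPEquiv.trans (g.symm.toPEquiv.trans x) = x := by
  rw [← PEquiv.trans_assoc, toPEquiv_trans_symm, PEquiv.refl_trans]

@[simp]
theorem Equiv.symm_toPEquiv_trans_trans {α β γ : Type*} (g : α ≃ β) (x : β ≃. γ) :
    g.symm.toPEquiv.trans (g.toPEquiv.trans x) = x := by
  rw [← PEquiv.trans_assoc, symm_toPEquiv_trans, PEquiv.refl_trans]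

section SymmetricInverseSemigroup

variable {n : ℕ}

noncomputable def sdomEquivSim (x : IS n) : sdom x ≃ sim x where
  toFun t := ⟨(x t).get t.2, x.isSome_symm_get t.2⟩
  invFun b := ⟨(x.symm b).get b.2, x.symm.isSome_symm_get b.2⟩
  left_inv _ := Subtype.ext <| Option.get_of_eq_some _ <| x.eq_some_iff.2 (Option.some_get _).symm
  right_inv _ := Subtype.ext <| Option.get_of_eq_some _ <| x.eq_some_iff.1 (Option.some_get _).symm

theorem apply_eq_some_sdomEquivSim (x : IS n) (t : sdom x) :
    x t = some (sdomEquivSim x t : Fin n) :=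
  (Option.some_get _).symm

theorem ncard_sdom (x : IS n) : (sdom x).ncard = srank x :=
  Set.ncard_congr' (sdomEquivSim x)

theorem sdom_trans_subset (p q : IS n) : sdom (p.trans q) ⊆ sdom p :=
  fun _ ht => Option.isSome_of_isSome_bind ht

theorem srank_trans_le_left (p q : IS n) : srank (p.trans q) ≤ srank p := by
  rw [← ncard_sdom, ← ncard_sdom]
  exact Set.ncard_le_ncard (sdom_trans_subset p q)

theorem srank_trans_le_right (p q : IS n) : srank (p.trans q) ≤ srank q :=
  Set.ncard_le_ncard (sdom_trans_subset q.symm p.symm)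

theorem srank_smulBy_le (a x y : IS n) : srank (smulBy a x y) ≤ srank a :=
  (srank_trans_le_left _ y).trans (srank_trans_le_right x a)

theorem exists_perm_trans_eq_of_srank_eq {a b : IS n} (h : srank a = srank b) :
    ∃ g k : Perm (Fin n), (g.toPEquiv.trans a).trans k.toPEquiv = b := by
  classical
  obtain ⟨eD⟩ : Nonempty (sdom b ≃ sdom a) := by
    rw [← Finite.card_eq]
    simp only [Nat.card_coe_set_eq, ncard_sdom, h]
  -- `g` carries `dom b` onto `dom a`; then `k (a (g t)) = b t` prescribes `k` on `im a`.
  let eI : sim a ≃ sim b := (sdomEquivSim a).symm.trans (eD.symm.trans (sdomEquivSim b))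
  refine ⟨eD.extendSubtype, eI.extendSubtype, PEquiv.ext fun t => ?_⟩
  by_cases ht : t ∈ sdom b
  · have hg : eD.extendSubtype t = eD ⟨t, ht⟩ := eD.extendSubtype_apply_of_mem t ht
    have hk : eI.extendSubtype (sdomEquivSim a (eD ⟨t, ht⟩)) = sdomEquivSim b ⟨t, ht⟩ := by
      rw [eI.extendSubtype_apply_of_mem _ (Subtype.prop _)]
      simp [eI]
    change (a (eD.extendSubtype t)).bind _ = _
    rw [hg, apply_eq_some_sdomEquivSim, apply_eq_some_sdomEquivSim b ⟨t, ht⟩, Option.bind_some,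
      Equiv.toPEquiv_apply, hk]
  · have hg : eD.extendSubtype t ∉ sdom a := eD.extendSubtype_not_mem t ht
    change (a (eD.extendSubtype t)).bind _ = _
    rw [Option.not_isSome_iff_eq_none.1 hg, Option.not_isSome_iff_eq_none.1 ht]
    rfl

theorem exists_srank_trans_eq {a : IS n} {k : ℕ} (hk : k ≤ srank a) :
    ∃ e : IS n, srank (e.trans a) = k := by
  classical
  obtain ⟨s, hs, rfl⟩ := Set.exists_subset_card_eq ((ncard_sdom a).symm ▸ hk)
  refine ⟨PEquiv.ofSet s, ?_⟩
  rw [← ncard_sdom]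
  congr 1
  ext t
  by_cases ht : t ∈ s
  · simpa [sdom, PEquiv.trans, PEquiv.ofSet, ht] using hs ht
  · simp [sdom, PEquiv.trans, PEquiv.ofSet, ht]

theorem range_smulBy (a : IS n) :
    Set.range (Function.uncurry (smulBy a)) = {z | srank z ≤ srank a} := by
  ext z
  constructor
  · rintro ⟨⟨x, y⟩, rfl⟩
    exact srank_smulBy_le a x y
  · intro hz
    obtain ⟨e, he⟩ := exists_srank_trans_eq hz
    obtain ⟨g, k, rfl⟩ := exists_perm_trans_eq_of_srank_eq he
    exact ⟨(g.toPEquiv.trans e, k.toPEquiv), by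
      simp only [Function.uncurry_apply_pair, smulBy, PEquiv.trans_assoc]⟩

theorem ncard_srank_le_lt_of_srank_lt {c d : IS n} (h : srank c < srank d) :
    {z : IS n | srank z ≤ srank c}.ncard < {z : IS n | srank z ≤ srank d}.ncard :=
  Set.ncard_lt_ncard
    ⟨fun _ hz => hz.trans h.le, fun hsub => (hsub (Set.mem_ofPred.2 le_rfl)).not_gt h⟩

theorem srank_eq_of_smulBy_iso {a b : IS n} (φ : IS n ≃ IS n)
    (hφ : ∀ x y, φ (smulBy a x y) = smulBy b (φ x) (φ y)) : srank a = srank b := by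
  have hcard : {z : IS n | srank z ≤ srank a}.ncard = {z : IS n | srank z ≤ srank b}.ncard := by
    rw [← range_smulBy, ← range_smulBy, ← φ.image_range_uncurry_of_map hφ,
      Set.ncard_image_of_injective _ φ.injective]
  rcases lt_trichotomy (srank a) (srank b) with h | h | h
  · exact absurd hcard (ncard_srank_le_lt_of_srank_lt h).ne
  · exact h
  · exact absurd hcard (ncard_srank_le_lt_of_srank_lt h).ne'

noncomputable def permConj (g k : Perm (Fin n)) : IS n ≃ IS n where
  toFun x := (g.toPEquiv.trans x).trans k.toPEquiv
  invFun x := (g.symm.toPEquiv.trans x).trans k.symm.toPEquiv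
  left_inv x := by simp [PEquiv.trans_assoc]
  right_inv x := by simp [PEquiv.trans_assoc]

theorem permConj_smulBy (g k : Perm (Fin n)) (a x y : IS n) :
    permConj k.symm g.symm (smulBy a x y) =
      smulBy ((g.toPEquiv.trans a).trans k.toPEquiv) (permConj k.symm g.symm x)
        (permConj k.symm g.symm y) := by
  simp [permConj, smulBy, PEquiv.trans_assoc]

end SymmetricInverseSemigroup

theorem sandwich_iso_iff_rank_eq_general (n : ℕ) (a b : IS n) :
    (∃ φ : IS n ≃ IS n, ∀ x y : IS n,
        φ (smulBy a x y) = smulBy b (φ x) (φ y)) ↔ srank a = srank b := by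
  refine ⟨fun ⟨φ, hφ⟩ => srank_eq_of_smulBy_iso φ hφ, fun h => ?_⟩
  obtain ⟨g, k, rfl⟩ := exists_perm_trans_eq_of_srank_eq h
  exact ⟨permConj k.symm g.symm, permConj_smulBy g k a⟩

/-- `(IS_n, *_a)` and `(IS_n, *_b)` are isomorphic as semigroups
iff `rank a = rank b`. -/
theorem sandwich_iso_iff_rank_eq (n : ℕ) (hn : 0 < n) (a b : IS n) :
    (∃ φ : IS n ≃ IS n, ∀ x y : IS n,
        φ (smulBy a x y) = smulBy b (φ x) (φ y)) ↔ srank a = srank b :=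
  sandwich_iso_iff_rank_eq_general n a b
end

section
/- An element a ∈ IS_n is an idempotent of the sandwich semigroup (IS_n, *) if and only if a is an idempotent of IS_n (i.e. aa = a) and dom(a) ⊆ A. -/
open Equiv

namespace PEquiv

variable {α : Type*}

/-- If `b ∈ f a`, evaluating `f.trans (ofSet s) |>.trans f = f` at `a` gives `b ∈ s` and
`f b = some b`, and injectivity of `f` then forces `b = a`. -/
theorem trans_ofSet_trans_self_eq_self_iff (f : α ≃. α) (s : Set α)
    [DecidablePred (· ∈ s)] :
    (f.trans (ofSet s)).trans f = f ↔ f ≤ ofSet s := by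
  constructor
  · intro h a b hab
    have hfefa : b ∈ ((f.trans (ofSet s)).trans f) a := by rwa [h]
    obtain ⟨c, hc, hbc⟩ := (mem_trans _ _ _ _).1 hfefa
    obtain ⟨d, hd, hcd⟩ := (mem_trans _ _ _ _).1 hc
    have hdb : d = b := Option.some_injective _ (hd.symm.trans hab)
    obtain ⟨hcd, hcs⟩ := mem_ofSet_iff.1 hcd
    rw [hcd, hdb] at hbc hcs
    obtain rfl : b = a := f.inj hbc hab
    exact mem_ofSet_iff.2 ⟨rfl, hcs⟩
  · intro hle
    ext a b
    constructor
    · intro hab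
      obtain ⟨c, hc, hbc⟩ := (mem_trans _ _ _ _).1 hab
      obtain ⟨d, hd, hcd⟩ := (mem_trans _ _ _ _).1 hc
      obtain ⟨rfl, -⟩ := mem_ofSet_iff.1 (hle a d hd)
      obtain ⟨rfl, -⟩ := mem_ofSet_iff.1 hcd
      exact hbc
    · intro hab
      obtain ⟨rfl, hbs⟩ := mem_ofSet_iff.1 (hle a b hab)
      have hbe : b ∈ (f.trans (ofSet s)) b :=
        (mem_trans _ _ _ _).2 ⟨b, hab, mem_ofSet_iff.2 ⟨rfl, hbs⟩⟩
      exact (mem_trans _ _ _ _).2 ⟨b, hbe, hab⟩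

theorem trans_self_eq_self_iff (f : α ≃. α) : f.trans f = f ↔ f ≤ PEquiv.refl α := by
  simpa using trans_ofSet_trans_self_eq_self_iff f Set.univ

theorem le_ofSet_iff (f : α ≃. α) (s : Set α) [DecidablePred (· ∈ s)] :
    f ≤ ofSet s ↔ f ≤ PEquiv.refl α ∧ {a | (f a).isSome} ⊆ s := by
  constructor
  · intro h
    refine ⟨fun a b hab => ?_, fun a ha => ?_⟩
    · obtain ⟨rfl, -⟩ := mem_ofSet_iff.1 (h a b hab)
      exact refl_apply b
    · obtain ⟨b, hab⟩ := Option.isSome_iff_exists.1 ha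
      obtain ⟨rfl, hbs⟩ := mem_ofSet_iff.1 (h a b hab)
      exact hbs
  · rintro ⟨hrefl, hdom⟩ a b hab
    obtain rfl : a = b := Option.mem_some_iff.1 (hrefl a b hab)
    exact mem_ofSet_iff.2 ⟨rfl, hdom (Option.isSome_iff_exists.2 ⟨a, hab⟩)⟩

end PEquiv

instance (n k : ℕ) : DecidablePred (· ∈ SetA n k) := fun i => Nat.decLt i k

theorem sandE_eq_ofSet (n k : ℕ) : sandE n k = PEquiv.ofSet (SetA n k) := rfl

theorem sandwich_idempotent_iff_general (n k : ℕ) (a : IS n) :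
    smul n k a a = a ↔ (a.trans a = a ∧ sdom a ⊆ SetA n k) := by
  rw [smul, sandE_eq_ofSet, PEquiv.trans_ofSet_trans_self_eq_self_iff,
    PEquiv.trans_self_eq_self_iff, PEquiv.le_ofSet_iff]
  rfl

/-- `a` is an idempotent of `(IS_n, *)` iff `a` is an idempotent of
`IS_n` and `dom a ⊆ A`. -/
theorem sandwich_idempotent_iff (n k : ℕ) (hk : 1 ≤ k) (hkn : k ≤ n) (a : IS n) :
    smul n k a a = a ↔ (a.trans a = a ∧ sdom a ⊆ SetA n k) :=
  sandwich_idempotent_iff_general n k a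
end

section
/- The sandwich idempotent e is the maximum element of the set of idempotents of (IS_n, *) under the natural partial order (f ≤ h ⟺ f * h = h * f = f); consequently, every semigroup automorphism φ of (IS_n, *) satisfies φ(e) = e. -/
open Equiv

/-
If `f * f = f` for the sandwich product, then for `f a = b` we get `b ∈ A` and
`f b = b`, so injectivity forces `a = b`; thus `f` is a partial identity on a subset of `A`,
i.e. `f ≤ e`, and such an `f` is absorbed by `e` on either side. An automorphism maps
idempotents to idempotents, so `φ e ≤ e` and `φ⁻¹ e ≤ e`; applying `φ` to `e * φ⁻¹ e = φ⁻¹ e`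
gives `φ e * e = e`, whence `φ e = φ e * e = e`.
-/

/-- `e` is the maximum idempotent for the natural partial order
(`f ≤ e ↔ mul f e = f ∧ mul e f = f`). -/
def IsMaximumIdempotent {α : Type*} (mul : α → α → α) (e : α) : Prop :=
  mul e e = e ∧ ∀ f, mul f f = f → mul f e = f ∧ mul e f = f

theorem IsMaximumIdempotent.perm_apply_eq {α : Type*} {mul : α → α → α} {e : α}
    (he : IsMaximumIdempotent mul e) (φ : Perm α)
    (hφ : ∀ x y, φ (mul x y) = mul (φ x) (φ y)) : φ e = e := by
  obtain ⟨hee, hmax⟩ := he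
  have hφe : mul (φ e) (φ e) = φ e := by rw [← hφ, hee]
  have hφsymm : mul (φ.symm e) (φ.symm e) = φ.symm e :=
    φ.injective (by rw [hφ, Equiv.apply_symm_apply, hee])
  calc φ e = mul (φ e) e := (hmax _ hφe).1.symm
    _ = mul (φ e) (φ (φ.symm e)) := by rw [Equiv.apply_symm_apply]
    _ = φ (mul e (φ.symm e)) := (hφ _ _).symm
    _ = φ (φ.symm e) := by rw [(hmax _ hφsymm).2]
    _ = e := Equiv.apply_symm_apply _ _

namespace PEquiv

variable {α : Type*} {s : Set α} [DecidablePred (· ∈ s)]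

theorem ofSet_trans_ofSet_self : (ofSet s).trans (ofSet s) = ofSet s := by
  ext a b
  simp only [trans_eq_some, ofSet_eq_some_iff]
  constructor
  · rintro ⟨c, ⟨rfl, -⟩, rfl, hb⟩
    exact ⟨rfl, hb⟩
  · rintro ⟨rfl, hb⟩
    exact ⟨b, ⟨rfl, hb⟩, rfl, hb⟩

theorem le_ofSet_of_trans_ofSet_trans_self {x : α ≃. α}
    (hx : (x.trans (ofSet s)).trans x = x) : x ≤ ofSet s := by
  intro a b hab
  have hb : b ∈ s ∧ x b = some b := by
    have hab' : ((x.trans (ofSet s)).trans x) a = some b := by rwa [hx]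
    obtain ⟨c, hc, hcb⟩ := (trans_eq_some _ _ _ _).1 hab'
    obtain ⟨d, hd, hdc⟩ := (trans_eq_some _ _ _ _).1 hc
    obtain ⟨rfl, hcs⟩ := ofSet_eq_some_iff.1 hdc
    obtain rfl : c = b := Option.some_injective _ (hd.symm.trans hab)
    exact ⟨hcs, hcb⟩
  exact ofSet_eq_some_iff.2 ⟨x.inj (hb.2 : b ∈ x b) hab, hb.1⟩

theorem trans_ofSet_eq_self_of_le {x : α ≃. α} (h : x ≤ ofSet s) : x.trans (ofSet s) = x := by
  ext a b
  simp only [trans_eq_some, ofSet_eq_some_iff]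
  refine ⟨?_, fun hb => ⟨b, hb, rfl, (mem_ofSet_iff.1 (h a b hb)).2⟩⟩
  rintro ⟨c, hc, rfl, -⟩
  exact hc

theorem ofSet_trans_eq_self_of_le {x : α ≃. α} (h : x ≤ ofSet s) : (ofSet s).trans x = x := by
  ext a b
  simp only [trans_eq_some, ofSet_eq_some_iff]
  refine ⟨?_, fun hb => ?_⟩
  · rintro ⟨c, ⟨rfl, -⟩, hc⟩
    exact hc
  · obtain ⟨rfl, hbs⟩ := mem_ofSet_iff.1 (h a b hb)
    exact ⟨b, ⟨rfl, hbs⟩, hb⟩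

variable (s) in
theorem isMaximumIdempotent_ofSet :
    IsMaximumIdempotent (fun x y : α ≃. α => (x.trans (ofSet s)).trans y) (ofSet s) := by
  refine ⟨by simp only [ofSet_trans_ofSet_self], fun f hf => ?_⟩
  beta_reduce at hf ⊢
  have hle := le_ofSet_of_trans_ofSet_trans_self hf
  exact ⟨by rw [trans_assoc, ofSet_trans_ofSet_self, trans_ofSet_eq_self_of_le hle],
    by rw [ofSet_trans_ofSet_self, ofSet_trans_eq_self_of_le hle]⟩

end PEquiv

-- makes `PEquiv.ofSet (SetA n k)` definitionally equal to `sandE n k`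
instance inst_s3 (n k : ℕ) : DecidablePred (· ∈ SetA n k) := fun i =>
  inferInstanceAs (Decidable ((i : ℕ) < k))

theorem sandE_max_idempotent_and_fixed_general (n k : ℕ) :
    smul n k (sandE n k) (sandE n k) = sandE n k ∧
    (∀ f : IS n, smul n k f f = f →
      smul n k f (sandE n k) = f ∧ smul n k (sandE n k) f = f) ∧
    (∀ φ : Equiv.Perm (IS n),
      (∀ x y : IS n, φ (smul n k x y) = smul n k (φ x) (φ y)) →
        φ (sandE n k) = sandE n k) := by
  have he : IsMaximumIdempotent (smul n k) (sandE n k) :=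
    PEquiv.isMaximumIdempotent_ofSet (SetA n k)
  exact ⟨he.1, he.2, he.perm_apply_eq⟩

/-- `e` is the maximum idempotent of `(IS_n, *)` for the natural
partial order, and every automorphism of `(IS_n, *)` fixes `e`. -/
theorem sandE_max_idempotent_and_fixed (n k : ℕ) (hk : 1 ≤ k) (hkn : k ≤ n) :
    smul n k (sandE n k) (sandE n k) = sandE n k ∧
    (∀ f : IS n, smul n k f f = f →
      smul n k f (sandE n k) = f ∧ smul n k (sandE n k) f = f) ∧
    (∀ φ : Equiv.Perm (IS n),
      (∀ x y : IS n, φ (smul n k x y) = smul n k (φ x) (φ y)) →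
        φ (sandE n k) = sandE n k) :=
  sandE_max_idempotent_and_fixed_general n k
end

section
/- For every idempotent f of the sandwich semigroup (IS_n, *), the two-sided principal ideal IS_n * f * IS_n = {x * f * y : x, y ∈ IS_n} equals {a ∈ IS_n : rank(a) ≤ rank(f)}. -/
/-!
An idempotent `f` of the sandwich semigroup is a partial identity on a subset of `A`. Ranks can
only drop under composition, which gives one inclusion. Conversely, if `rank a ≤ rank f`, pick a
permutation `σ` carrying `im a` into `im f`; then `x = aσ` has image inside `im f ⊆ A`, so
`x * f = x`, and `a = x * f * σ⁻¹`.
-/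

open Equiv

section Rank

variable {n : ℕ}

lemma mem_sim_iff {x : IS n} {b : Fin n} : b ∈ sim x ↔ ∃ a, x a = some b :=
  Option.isSome_iff_exists.trans (exists_congr fun _ ↦ x.eq_some_iff)

lemma mem_sim_trans_iff {u v : IS n} {b : Fin n} :
    b ∈ sim (u.trans v) ↔ ∃ c ∈ sim u, v c = some b := by
  simp only [mem_sim_iff, PEquiv.trans_eq_some]
  exact ⟨fun ⟨a, c, hac, hcb⟩ ↦ ⟨c, ⟨a, hac⟩, hcb⟩, fun ⟨c, ⟨a, hac⟩, hcb⟩ ↦ ⟨a, c, hac, hcb⟩⟩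

lemma srank_trans_le_right_s10 (u v : IS n) : srank (u.trans v) ≤ srank v :=
  Nat.card_mono (Set.toFinite _) fun _ hb ↦
    let ⟨c, _, hcb⟩ := mem_sim_trans_iff.1 hb
    mem_sim_iff.2 ⟨c, hcb⟩

lemma srank_trans_le_left_s10 (u v : IS n) : srank (u.trans v) ≤ srank u := by
  have hsub : some '' sim (u.trans v) ⊆ (⇑v) '' sim u := by
    rintro _ ⟨b, hb, rfl⟩
    exact mem_sim_trans_iff.1 hb
  simp only [srank, Nat.card_coe_set_eq]
  calc (sim (u.trans v)).ncard = (some '' sim (u.trans v)).ncard :=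
        (Set.ncard_image_of_injective _ (Option.some_injective _)).symm
    _ ≤ ((⇑v) '' sim u).ncard := Set.ncard_le_ncard hsub
    _ ≤ (sim u).ncard := Set.ncard_image_le (Set.toFinite _)

lemma trans_eq_self_of_forall_mem_sim {x v : IS n} (h : ∀ b ∈ sim x, v b = some b) :
    x.trans v = x := by
  ext1 t
  change (x t).bind v = x t
  cases ht : x t with
  | none => rfl
  | some b => exact h b (mem_sim_iff.2 ⟨t, ht⟩)

end Rank

section Sandwich

variable {n k : ℕ}

lemma sandE_apply_of_mem {b : Fin n} (hb : b ∈ SetA n k) : sandE n k b = some b :=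
  if_pos hb

lemma smul_eq_trans_of_sim_subset {x : IS n} (hx : sim x ⊆ SetA n k) (y : IS n) :
    smul n k x y = x.trans y := by
  rw [smul, trans_eq_self_of_forall_mem_sim fun b hb ↦ sandE_apply_of_mem (hx hb)]

lemma srank_smul_le_left (x y : IS n) : srank (smul n k x y) ≤ srank x :=
  (srank_trans_le_left_s10 _ _).trans (srank_trans_le_left_s10 _ _)

lemma srank_smul_le_right (x y : IS n) : srank (smul n k x y) ≤ srank y :=
  srank_trans_le_right_s10 _ _

lemma apply_eq_self_and_mem_setA_of_mem_sim {f : IS n} (hf : smul n k f f = f) {b : Fin n}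
    (hb : b ∈ sim f) : f b = some b ∧ b ∈ SetA n k := by
  obtain ⟨a, hab⟩ := mem_sim_iff.1 hb
  have hfef : ((f a).bind (sandE n k)).bind f = some b := by
    rw [← hab]; exact congrArg (· a) hf
  rw [hab, Option.bind_some] at hfef
  by_cases hbA : b ∈ SetA n k
  · rw [sandE_apply_of_mem hbA, Option.bind_some] at hfef
    exact ⟨hfef, hbA⟩
  · rw [show sandE n k b = none from if_neg hbA, Option.bind_none] at hfef
    cases hfef

lemma sim_subset_setA_of_smul_self {f : IS n} (hf : smul n k f f = f) : sim f ⊆ SetA n k :=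
  fun _ hb ↦ (apply_eq_self_and_mem_setA_of_mem_sim hf hb).2

lemma smul_eq_self_of_sim_subset {f x : IS n} (hf : smul n k f f = f) (hx : sim x ⊆ sim f) :
    smul n k x f = x := by
  rw [smul_eq_trans_of_sim_subset (hx.trans (sim_subset_setA_of_smul_self hf))]
  exact trans_eq_self_of_forall_mem_sim
    fun b hb ↦ (apply_eq_self_and_mem_setA_of_mem_sim hf (hx hb)).1

end Sandwich

lemma Equiv.Perm.exists_mapsTo_of_card_le {β : Type*} [Finite β] {s t : Set β}
    (h : Nat.card s ≤ Nat.card t) : ∃ σ : Perm β, Set.MapsTo σ s t := by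
  have : Fintype s := Fintype.ofFinite s
  have : Fintype t := Fintype.ofFinite t
  rw [Nat.card_eq_fintype_card, Nat.card_eq_fintype_card] at h
  obtain ⟨g⟩ := Function.Embedding.nonempty_of_card_le h
  obtain ⟨σ, hσ⟩ := Perm.exists_extending_pair (Subtype.val : s → β) (fun c ↦ (g c : β))
    Subtype.val_injective (Subtype.val_injective.comp g.injective)
  exact ⟨σ, fun b hb ↦ hσ ⟨b, hb⟩ ▸ (g ⟨b, hb⟩).2⟩

theorem principal_ideal_eq_rank_le_general (n k : ℕ)
    (f : IS n) (hf : smul n k f f = f) :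
    {c : IS n | ∃ x y : IS n, smul n k (smul n k x f) y = c} =
      {a : IS n | srank a ≤ srank f} := by
  ext a
  constructor
  · rintro ⟨x, y, rfl⟩
    exact (srank_smul_le_left _ _).trans (srank_smul_le_right _ _)
  · intro ha
    obtain ⟨σ, hσ⟩ := Perm.exists_mapsTo_of_card_le ha
    have hx : sim (a.trans σ.toPEquiv) ⊆ sim f := fun b hb ↦ by
      obtain ⟨c, hc, hcb⟩ := mem_sim_trans_iff.1 hb
      exact Option.some_inj.1 hcb ▸ hσ hc
    refine ⟨a.trans σ.toPEquiv, σ.symm.toPEquiv, ?_⟩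
    rw [smul_eq_self_of_sim_subset hf hx,
      smul_eq_trans_of_sim_subset (hx.trans (sim_subset_setA_of_smul_self hf)),
      PEquiv.trans_assoc, ← toPEquiv_trans, self_trans_symm, toPEquiv_refl, PEquiv.trans_refl]

/-- for every idempotent `f` of `(IS_n, *)`, the principal two-sided
ideal `IS_n * f * IS_n` equals `{a : rank a ≤ rank f}`. -/
theorem principal_ideal_eq_rank_le (n k : ℕ) (hk : 1 ≤ k) (hkn : k ≤ n)
    (f : IS n) (hf : smul n k f f = f) :
    {c : IS n | ∃ x y : IS n, smul n k (smul n k x f) y = c} =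
      {a : IS n | srank a ≤ srank f} :=
  principal_ideal_eq_rank_le_general n k f hf
end

section
/- In the sandwich semigroup (IS_n, *) with zero element 0 (the empty transformation): (1) x ∈ Ann_L(IS_n, *) (i.e. x * a = 0 for all a ∈ IS_n) if and only if im(x) ⊆ Ā; (2) x ∈ Ann_R(IS_n, *) (i.e. a * x = 0 for all a ∈ IS_n) if and only if dom(x) ⊆ Ā; (3) x ∈ Ann(IS_n, *) = Ann_L ∩ Ann_R if and only if im(x) ⊆ Ā and dom(x) ⊆ Ā. -/
open Equiv

/-! A product `x * a = (x e) a` vanishes for every `a` exactly when `x e = 0` (take `a = 1`), and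
dually `a * x = a (e x)` vanishes for every `a` exactly when `e x = 0`. A composite of partial
injections is empty iff the image of the first misses the domain of the second, and
`dom e = im e = A`. -/

namespace PEquiv

variable {α β γ : Type*}

theorem forall_trans_eq_bot_iff (f : α ≃. β) : (∀ g : β ≃. β, f.trans g = ⊥) ↔ f = ⊥ :=
  ⟨fun h => by simpa using h (PEquiv.refl β), fun h g => by rw [h, bot_trans]⟩

theorem forall_trans_eq_bot_iff' (f : β ≃. γ) : (∀ g : β ≃. β, g.trans f = ⊥) ↔ f = ⊥ :=
  ⟨fun h => by simpa using h (PEquiv.refl β), fun h g => by rw [h, trans_bot]⟩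

end PEquiv

theorem trans_eq_bot_iff_disjoint {n : ℕ} (x y : IS n) :
    x.trans y = ⊥ ↔ Disjoint (sim x) (sdom y) := by
  simp only [PEquiv.ext_iff, PEquiv.bot_apply, PEquiv.trans_eq_none, Set.disjoint_left, sim,
    sdom, Set.mem_ofPred_eq, Option.isSome_iff_exists, ← Option.mem_def, PEquiv.mem_iff_mem]
  constructor
  · rintro h b ⟨a, hab⟩ ⟨c, hbc⟩
    exact (h a b c).elim (· hab) (· hbc)
  · intro h a b c
    by_contra! hne
    exact h ⟨a, hne.1⟩ ⟨c, hne.2⟩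

theorem sdom_sandE (n k : ℕ) : sdom (sandE n k) = SetA n k := by
  ext i
  simp [sdom, SetA, sandE]

theorem sim_sandE (n k : ℕ) : sim (sandE n k) = SetA n k := by
  ext i
  simp [sim, SetA, sandE, PEquiv.symm]

theorem forall_smul_eq_bot_iff_left {n k : ℕ} (x : IS n) :
    (∀ a : IS n, smul n k x a = ⊥) ↔ sim x ⊆ (SetA n k)ᶜ := by
  rw [Set.subset_compl_iff_disjoint_right, ← sdom_sandE n k, ← trans_eq_bot_iff_disjoint,
    ← PEquiv.forall_trans_eq_bot_iff]
  rfl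

theorem forall_smul_eq_bot_iff_right {n k : ℕ} (x : IS n) :
    (∀ a : IS n, smul n k a x = ⊥) ↔ sdom x ⊆ (SetA n k)ᶜ := by
  rw [Set.subset_compl_iff_disjoint_left, ← sim_sandE n k, ← trans_eq_bot_iff_disjoint,
    ← PEquiv.forall_trans_eq_bot_iff']
  simp only [smul, PEquiv.trans_assoc]

theorem annihilators_general (n k : ℕ) (x : IS n) :
    ((∀ a : IS n, smul n k x a = ⊥) ↔ sim x ⊆ (SetA n k)ᶜ) ∧
    ((∀ a : IS n, smul n k a x = ⊥) ↔ sdom x ⊆ (SetA n k)ᶜ) ∧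
    (((∀ a : IS n, smul n k x a = ⊥) ∧ (∀ a : IS n, smul n k a x = ⊥)) ↔
      (sim x ⊆ (SetA n k)ᶜ ∧ sdom x ⊆ (SetA n k)ᶜ)) :=
  ⟨forall_smul_eq_bot_iff_left x, forall_smul_eq_bot_iff_right x,
    and_congr (forall_smul_eq_bot_iff_left x) (forall_smul_eq_bot_iff_right x)⟩

/-- descriptions of the left, right and two-sided annihilators of
`(IS_n, *)` (with zero element the empty transformation `⊥`). -/
theorem annihilators (n k : ℕ) (hk : 1 ≤ k) (hkn : k ≤ n) (x : IS n) :
    ((∀ a : IS n, smul n k x a = ⊥) ↔ sim x ⊆ (SetA n k)ᶜ) ∧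
    ((∀ a : IS n, smul n k a x = ⊥) ↔ sdom x ⊆ (SetA n k)ᶜ) ∧
    (((∀ a : IS n, smul n k x a = ⊥) ∧ (∀ a : IS n, smul n k a x = ⊥)) ↔
      (sim x ⊆ (SetA n k)ᶜ ∧ sdom x ⊆ (SetA n k)ᶜ)) :=
  annihilators_general n k x
end

section
/- Main theorem: Let 𝒩 be the subgroup of Aut(IS_n, *) of all automorphisms π with π(a) ∼ a for all a ∈ IS_n, and let ℋ be the image in Aut(IS_n, *) of the injective homomorphism (g, h₁, h₂) ↦ τ_(g,h₁,h₂) from S(A) × S(Ā) × S(Ā). Then 𝒩 is normal in Aut(IS_n, *), 𝒩 ∩ ℋ is trivial, and 𝒩 · ℋ = Aut(IS_n, *); consequently Aut(IS_n, *) is isomorphic to the semidirect product 𝒩 ⋊ (S(A) × S(Ā) × S(Ā)). -/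
open Equiv

/-- `a` is decomposable in `(IS_n, *)` if `a = b * c` for some `b, c`. -/
def Decomp (n k : ℕ) (a : IS n) : Prop := ∃ b c : IS n, smul n k b c = a

/-- `M₁(a) = {x ∈ dom a : x ∈ A, a x ∈ A}`. -/
def M1 (n k : ℕ) (a : IS n) : Set (Fin n) :=
  {x | x ∈ SetA n k ∧ ∃ y ∈ SetA n k, a x = some y}

/-- `M₂(a) = {x ∈ dom a : x ∈ A, a x ∈ Ā}`. -/
def M2 (n k : ℕ) (a : IS n) : Set (Fin n) :=
  {x | x ∈ SetA n k ∧ ∃ y, y ∉ SetA n k ∧ a x = some y}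

/-- `M₃(a) = {x ∈ dom a : x ∈ Ā, a x ∈ A}`. -/
def M3 (n k : ℕ) (a : IS n) : Set (Fin n) :=
  {x | x ∉ SetA n k ∧ ∃ y ∈ SetA n k, a x = some y}

/-- The relation `∼` : for indecomposable `a, b`, `a ∼ b` iff `Mᵢ(a) = Mᵢ(b)` for
`i = 1,2,3` and `a x = b x` on `M₁(a) ∪ M₂(a) ∪ M₃(a)`; if `a` or `b` is
decomposable, `a ∼ b` iff `a = b`. -/
def SimRel (n k : ℕ) (a b : IS n) : Prop :=
  (¬ Decomp n k a ∧ ¬ Decomp n k b ∧ M1 n k a = M1 n k b ∧ M2 n k a = M2 n k b ∧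
    M3 n k a = M3 n k b ∧ ∀ x ∈ M1 n k a ∪ M2 n k a ∪ M3 n k a, a x = b x)
  ∨ ((Decomp n k a ∨ Decomp n k b) ∧ a = b)

/-- `g⋈h` : the permutation of `Fin n` acting as `g` on `A` and as `h` on `Ā`. -/
def bowtie {n : ℕ} (k : ℕ) (g : Perm {x : Fin n // (x : ℕ) < k})
    (h : Perm {x : Fin n // ¬ (x : ℕ) < k}) : Perm (Fin n) :=
  Equiv.Perm.subtypeCongr g h

/-- `τ_(g,h₁,h₂) : a ↦ (g⋈h₁)⁻¹ · a · (g⋈h₂)` (ordinary, left-to-right, composition). -/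
def tauMap {n : ℕ} (k : ℕ) (g : Perm {x : Fin n // (x : ℕ) < k})
    (h₁ h₂ : Perm {x : Fin n // ¬ (x : ℕ) < k}) (a : IS n) : IS n :=
  ((bowtie k g h₁).symm.toPEquiv.trans a).trans (bowtie k g h₂).toPEquiv

/-!
An automorphism `σ` of `(IS_n, *)` fixes `⊥` and permutes the primitive idempotents, which are
the `single x x` with `x ∈ A`. Since `single s t = single s x₀ * single x₀ t` for any `x₀ ∈ A`,
`σ` sends `single s t` to `single (p s) (q t)` for permutations `p, q` of `N`; idempotency of
`single x x` forces `p, q` to preserve `A` and agree there, so `σ` agrees with some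
`τ = τ_(g,h₁,h₂)` on rank-one elements. Now `single x x * a` and `a * single y y` have rank at
most one and determine how `a` acts by sandwich multiplication from either side, which on
indecomposables is exactly the relation `∼`; hence `τ⁻¹ σ ∈ 𝒩`. Because `∼` is described through
these actions, every automorphism preserves it and `𝒩` is normal, while the rank-one elements
are decomposable, so an element of `𝒩 ∩ ℋ` fixes them all and is trivial.
-/

namespace PEquiv

variable {α β : Type*}

theorem toPEquiv_trans_apply (p : Perm α) (a : α ≃. β) (x : α) :
    (p.toPEquiv.trans a) x = a (p x) := rfl

theorem trans_toPEquiv_apply (a : α ≃. β) (q : Perm β) (x : α) :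
    (a.trans q.toPEquiv) x = (a x).map q := by
  show (a x).bind _ = _
  cases a x <;> rfl

def conjHom : Perm α × Perm β →* Perm (α ≃. β) where
  toFun pq :=
    { toFun := fun a => (pq.1.symm.toPEquiv.trans a).trans pq.2.toPEquiv
      invFun := fun a => (pq.1.toPEquiv.trans a).trans pq.2.symm.toPEquiv
      left_inv := fun a => by
        ext1 x; simp [trans_toPEquiv_apply, toPEquiv_trans_apply, Option.map_map]
      right_inv := fun a => by
        ext1 x; simp [trans_toPEquiv_apply, toPEquiv_trans_apply, Option.map_map] }
  map_one' := by ext1 a; ext1 x; simp [Perm.one_def]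
  map_mul' _ _ := by
    ext1 a; ext1 x; simp [trans_toPEquiv_apply, toPEquiv_trans_apply, Option.map_map, Perm.mul_def]

theorem conjHom_apply (p : Perm α) (q : Perm β) (a : α ≃. β) :
    conjHom (p, q) a = (p.symm.toPEquiv.trans a).trans q.toPEquiv := rfl

theorem conjHom_single [DecidableEq α] [DecidableEq β] (p : Perm α) (q : Perm β) (x : α) (y : β) :
    conjHom (p, q) (single x y) = single (p x) (q y) := by
  rw [conjHom_apply, trans_single_of_mem _ (by simp : x ∈ p.symm.toPEquiv (p x)),
    single_trans_of_mem _ (by simp : q y ∈ q.toPEquiv y)]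

theorem exists_apply_eq_some_of_ne_bot {a : α ≃. β} (ha : a ≠ ⊥) : ∃ x y, a x = some y := by
  by_contra! h
  exact ha (PEquiv.ext fun x => Option.eq_none_iff_forall_ne_some.2 (h x))

theorem single_ne_bot [DecidableEq α] [DecidableEq β] (a : α) (b : β) : single a b ≠ ⊥ :=
  fun h => by simpa using congrArg (· a) h

theorem single_eq_single_iff [DecidableEq α] [DecidableEq β] {a c : α} {b d : β} :
    single a b = single c d ↔ a = c ∧ b = d :=
  ⟨fun h => (mem_single_iff _ _ _ _).1 (h ▸ mem_single a b), fun ⟨hac, hbd⟩ => hac ▸ hbd ▸ rfl⟩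

theorem eq_iff_forall_single_trans [DecidableEq α] {f g : α ≃. β} :
    f = g ↔ ∀ x, (single x x).trans f = (single x x).trans g := by
  refine ⟨fun h _ => h ▸ rfl, fun h => PEquiv.ext fun x => ?_⟩
  simpa [PEquiv.trans] using congrArg (· x) (h x)

theorem eq_iff_forall_trans_single [DecidableEq β] {f g : α ≃. β} :
    f = g ↔ ∀ y, f.trans (single y y) = g.trans (single y y) := by
  rw [← symm_injective.eq_iff, eq_iff_forall_single_trans]
  refine forall_congr' fun y => ?_
  rw [← symm_injective.eq_iff (a := f.trans _), symm_trans_rev, symm_trans_rev, symm_single]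

end PEquiv

theorem Subgroup.nonempty_mulEquiv_semidirectProduct {G P : Type*} [Group G] [Group P]
    {A N : Subgroup G} (Φ : P →* G) (hΦ : Function.Injective Φ) (hNA : N ≤ A)
    (hΦA : ∀ p, Φ p ∈ A) (hnorm : ∀ σ ∈ A, ∀ π ∈ N, σ * π * σ⁻¹ ∈ N)
    (hdisj : N ⊓ Φ.range = ⊥) (hgen : ∀ σ ∈ A, ∃ p, (Φ p)⁻¹ * σ ∈ N) :
    ∃ act : P →* MulAut N, Nonempty (N ⋊[act] P ≃* A) := by
  have hΦN (p : P) : Φ p ∈ Subgroup.normalizer (N : Set G) :=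
    Subgroup.mem_normalizer_iff.2 fun π => ⟨hnorm _ (hΦA p) π, fun h => by
      simpa [mul_assoc] using hnorm _ (inv_mem (hΦA p)) _ h⟩
  refine ⟨N.normalizerMonoidHom.comp (Φ.codRestrict _ hΦN), ⟨MulEquiv.ofBijective
    (SemidirectProduct.lift (Subgroup.inclusion hNA) (Φ.codRestrict A hΦA) fun p => ?_) ⟨?_, ?_⟩⟩⟩
  · ext π
    rfl
  · refine (injective_iff_map_eq_one _).2 fun ⟨π, p⟩ h => ?_
    have h' : (π : G) * Φ p = 1 := congrArg Subtype.val h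
    have hp : Φ p ∈ N ⊓ Φ.range :=
      Subgroup.mem_inf.2 ⟨eq_inv_of_mul_eq_one_right h' ▸ inv_mem π.2, p, rfl⟩
    rw [hdisj, Subgroup.mem_bot] at hp
    rw [hp, mul_one] at h'
    obtain rfl : p = 1 := hΦ (hp.trans (map_one Φ).symm)
    obtain rfl : π = 1 := Subtype.ext h'
    rfl
  · intro σ
    obtain ⟨p, hp⟩ := hgen σ σ.2
    refine ⟨⟨⟨Φ p * ((Φ p)⁻¹ * σ) * (Φ p)⁻¹, hnorm _ (hΦA p) _ hp⟩, p⟩, Subtype.ext ?_⟩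
    simp

namespace Sandwich

open PEquiv

variable {n k : ℕ}

theorem smul_eq_trans (x y : IS n) : smul n k x y = x.trans ((sandE n k).trans y) :=
  PEquiv.trans_assoc _ _ _

theorem sandE_apply_of_lt {x : Fin n} (hx : (x : ℕ) < k) : sandE n k x = some x := if_pos hx

theorem sandE_apply_of_not_lt {x : Fin n} (hx : ¬ (x : ℕ) < k) : sandE n k x = none := if_neg hx

theorem sandE_trans_apply (a : IS n) (x : Fin n) :
    ((sandE n k).trans a) x = if (x : ℕ) < k then a x else none := by
  by_cases hx : (x : ℕ) < k
  · simp [PEquiv.trans, sandE_apply_of_lt hx, hx]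
  · simp [PEquiv.trans, sandE_apply_of_not_lt hx, hx]

theorem trans_sandE_eq_some {a : IS n} {x y : Fin n} :
    (a.trans (sandE n k)) x = some y ↔ a x = some y ∧ (y : ℕ) < k := by
  rw [trans_eq_some]
  constructor
  · rintro ⟨z, hz, hzy⟩
    by_cases h : (z : ℕ) < k
    · rw [sandE_apply_of_lt h, Option.some_inj] at hzy
      exact hzy ▸ ⟨hz, h⟩
    · simp [sandE_apply_of_not_lt h] at hzy
  · rintro ⟨h, hy⟩
    exact ⟨y, h, sandE_apply_of_lt hy⟩

theorem symm_sandE : (sandE n k).symm = sandE n k := rfl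

theorem symm_smul (x y : IS n) : (smul n k x y).symm = smul n k y.symm x.symm := by
  simp only [smul, symm_trans_rev, symm_sandE, PEquiv.trans_assoc]

theorem sandE_trans_sandE : (sandE n k).trans (sandE n k) = sandE n k := by
  ext x y
  rw [sandE_trans_apply]
  split_ifs with h <;> simp [sandE_apply_of_lt, sandE_apply_of_not_lt, h]

theorem sandE_smul (a : IS n) : smul n k (sandE n k) a = (sandE n k).trans a := by
  rw [smul, sandE_trans_sandE]

theorem smul_sandE (a : IS n) : smul n k a (sandE n k) = a.trans (sandE n k) := by
  rw [smul_eq_trans, sandE_trans_sandE]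

theorem single_trans_sandE {s x : Fin n} (hx : (x : ℕ) < k) :
    (single s x).trans (sandE n k) = single s x :=
  single_trans_of_mem s (sandE_apply_of_lt hx)

theorem single_smul_of_lt {s x : Fin n} (hx : (x : ℕ) < k) (a : IS n) :
    smul n k (single s x) a = (single s x).trans a := by
  rw [smul, single_trans_sandE hx]

theorem smul_single_of_lt {y t : Fin n} (hy : (y : ℕ) < k) (a : IS n) :
    smul n k a (single y t) = a.trans (single y t) := by
  apply symm_injective
  rw [symm_smul, symm_single, symm_trans_rev, symm_single, single_smul_of_lt hy]

theorem single_smul_of_not_lt {s x : Fin n} (hx : ¬ (x : ℕ) < k) (a : IS n) :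
    smul n k (single s x) a = ⊥ := by
  rw [smul, single_trans_of_eq_none s (sandE_apply_of_not_lt hx), bot_trans]

theorem bot_smul (a : IS n) : smul n k ⊥ a = ⊥ := by rw [smul, bot_trans, bot_trans]

theorem smul_bot (a : IS n) : smul n k a ⊥ = ⊥ := trans_bot _

theorem smul_single_single {b : Fin n} (hb : (b : ℕ) < k) (a c : Fin n) :
    smul n k (single a b) (single b c) = single a c := by
  rw [single_smul_of_lt hb, single_trans_single]

theorem smul_single_single_eq_bot {a b c d : Fin n} (h : ¬ ((b : ℕ) < k ∧ b = c)) :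
    smul n k (single a b) (single c d) = ⊥ := by
  by_cases hb : (b : ℕ) < k
  · rw [single_smul_of_lt hb, single_trans_single_of_ne (fun hbc => h ⟨hb, hbc⟩)]
  · exact single_smul_of_not_lt hb _

theorem decomp_single {x₀ : Fin n} (hx₀ : (x₀ : ℕ) < k) (s t : Fin n) :
    Decomp n k (single s t) :=
  ⟨single s x₀, single x₀ t, smul_single_single hx₀ s t⟩

theorem single_smul_eq_bot_or (s x : Fin n) (a : IS n) :
    smul n k (single s x) a = ⊥ ∨ ∃ y, smul n k (single s x) a = single s y := by
  by_cases hx : (x : ℕ) < k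
  · rw [single_smul_of_lt hx]
    rcases hax : a x with _ | y
    · exact Or.inl (single_trans_of_eq_none s hax)
    · exact Or.inr ⟨y, single_trans_of_mem s hax⟩
  · exact Or.inl (single_smul_of_not_lt hx a)

theorem smul_single_eq_bot_or (a : IS n) (y t : Fin n) :
    smul n k a (single y t) = ⊥ ∨ ∃ s, smul n k a (single y t) = single s t := by
  rw [← symm_symm (smul n k a _), symm_smul, symm_single]
  rcases single_smul_eq_bot_or t y a.symm with h | ⟨s, h⟩ <;> rw [h]
  exacts [Or.inl symm_bot, Or.inr ⟨s, symm_single t s⟩]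

theorem eq_single_of_single_smul_eq {x : Fin n} (hx : (x : ℕ) < k) {b : IS n} (hb : b ≠ ⊥)
    (h : smul n k (single x x) b = b) : ∃ y, b = single x y := by
  rw [single_smul_of_lt hx] at h
  rcases hbx : b x with _ | y
  · exact absurd (h.symm.trans (single_trans_of_eq_none x hbx)) hb
  · exact ⟨y, h.symm.trans (single_trans_of_mem x hbx)⟩

theorem eq_single_of_smul_single_eq {y : Fin n} (hy : (y : ℕ) < k) {b : IS n} (hb : b ≠ ⊥)
    (h : smul n k b (single y y) = b) : ∃ s, b = single s y := by
  rw [smul_single_of_lt hy] at h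
  rcases hby : b.symm y with _ | s
  · exact absurd (h.symm.trans (trans_single_of_eq_none y hby)) hb
  · exact ⟨s, h.symm.trans (trans_single_of_mem y ((PEquiv.eq_some_iff b).1 hby))⟩

def IsPrimitiveIdempotent (n k : ℕ) (a : IS n) : Prop :=
  a ≠ ⊥ ∧ smul n k a a = a ∧
    ∀ b, smul n k (smul n k a b) a = a ∨ smul n k (smul n k a b) a = ⊥

theorem isPrimitiveIdempotent_single {x : Fin n} (hx : (x : ℕ) < k) :
    IsPrimitiveIdempotent n k (single x x) := by
  refine ⟨single_ne_bot x x, smul_single_single hx x x, fun b => ?_⟩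
  rw [single_smul_of_lt hx]
  rcases hbx : b x with _ | y
  · rw [single_trans_of_eq_none x hbx, bot_smul]
    exact Or.inr rfl
  · rw [single_trans_of_mem x hbx]
    by_cases hy : (y : ℕ) < k ∧ y = x
    · rw [hy.2, smul_single_single hx]
      exact Or.inl rfl
    · exact Or.inr (smul_single_single_eq_bot hy)

theorem IsPrimitiveIdempotent.exists_eq_single {a : IS n} (ha : IsPrimitiveIdempotent n k a) :
    ∃ y : Fin n, (y : ℕ) < k ∧ a = single y y := by
  obtain ⟨hne, hidem, hprim⟩ := ha
  obtain ⟨t, y, hty⟩ := exists_apply_eq_some_of_ne_bot hne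
  obtain ⟨z, hz, hzy⟩ := (trans_eq_some _ _ _ _).1 ((congrArg (· t) hidem).trans hty)
  obtain ⟨htz, hzk⟩ := trans_sandE_eq_some.1 hz
  obtain rfl : z = y := Option.some_injective _ (htz.symm.trans hty)
  have hsandwich : smul n k (smul n k a (single z z)) a = single z z := by
    rw [smul_single_of_lt hzk, trans_single_of_mem z hzy, single_smul_of_lt hzk,
      single_trans_of_mem z hzy]
  rcases hprim (single z z) with h | h <;> rw [hsandwich] at h
  · exact ⟨z, hzk, h.symm⟩
  · exact absurd h (single_ne_bot z z)

def SameAction (n k : ℕ) (a b : IS n) : Prop :=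
  (∀ c, smul n k c a = smul n k c b) ∧ ∀ c, smul n k a c = smul n k b c

theorem sameAction_iff_trans {a b : IS n} : SameAction n k a b ↔
    (sandE n k).trans a = (sandE n k).trans b ∧ a.trans (sandE n k) = b.trans (sandE n k) := by
  constructor
  · rintro ⟨hl, hr⟩
    rw [← sandE_smul, ← sandE_smul, ← smul_sandE, ← smul_sandE]
    exact ⟨hl _, hr _⟩
  · rintro ⟨hl, hr⟩
    exact ⟨fun c => by rw [smul_eq_trans, hl, ← smul_eq_trans],
      fun c => by rw [smul, hr, ← smul]⟩

theorem sandE_trans_eq_iff {a b : IS n} :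
    (sandE n k).trans a = (sandE n k).trans b ↔ ∀ x : Fin n, (x : ℕ) < k → a x = b x := by
  refine ⟨fun h x hx => ?_, fun h => PEquiv.ext fun x => ?_⟩
  · simpa [sandE_trans_apply, hx] using congrArg (· x) h
  · simp only [sandE_trans_apply]
    split_ifs with hx
    exacts [h x hx, rfl]

theorem trans_sandE_eq_iff {a b : IS n} :
    a.trans (sandE n k) = b.trans (sandE n k) ↔
      ∀ x y : Fin n, (y : ℕ) < k → (a x = some y ↔ b x = some y) := by
  refine ⟨fun h x y hy => ?_, fun h => PEquiv.ext fun x => Option.ext fun y => ?_⟩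
  · simpa [trans_sandE_eq_some, hy] using Iff.of_eq (congrArg (· x = some y) h)
  · simp only [trans_sandE_eq_some]
    exact ⟨fun ⟨hxy, hy⟩ => ⟨(h x y hy).1 hxy, hy⟩, fun ⟨hxy, hy⟩ => ⟨(h x y hy).2 hxy, hy⟩⟩

theorem sameAction_iff {a b : IS n} : SameAction n k a b ↔
    ∀ x y : Fin n, ((x : ℕ) < k ∨ (y : ℕ) < k) → (a x = some y ↔ b x = some y) := by
  rw [sameAction_iff_trans, sandE_trans_eq_iff, trans_sandE_eq_iff]
  constructor
  · rintro ⟨hl, hr⟩ x y (hx | hy)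
    exacts [by rw [hl x hx], hr x y hy]
  · intro h
    exact ⟨fun x hx => Option.ext fun y => h x y (Or.inl hx), fun x y hy => h x y (Or.inr hy)⟩

theorem mSets_eq_iff {a b : IS n} :
    (M1 n k a = M1 n k b ∧ M2 n k a = M2 n k b ∧ M3 n k a = M3 n k b ∧
      ∀ x ∈ M1 n k a ∪ M2 n k a ∪ M3 n k a, a x = b x) ↔
      ∀ x y : Fin n, ((x : ℕ) < k ∨ (y : ℕ) < k) → (a x = some y ↔ b x = some y) := by
  simp only [Set.ext_iff, M1, M2, M3, SetA, Set.mem_union, Set.mem_ofPred_eq]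
  grind

theorem sameAction_refl (a : IS n) : SameAction n k a a := ⟨fun _ => rfl, fun _ => rfl⟩

theorem SameAction.symm {a b : IS n} (h : SameAction n k a b) : SameAction n k b a :=
  ⟨fun c => (h.1 c).symm, fun c => (h.2 c).symm⟩

theorem SameAction.trans {a b c : IS n} (h : SameAction n k a b) (h' : SameAction n k b c) :
    SameAction n k a c :=
  ⟨fun d => (h.1 d).trans (h'.1 d), fun d => (h.2 d).trans (h'.2 d)⟩

theorem simRel_iff {a b : IS n} :
    SimRel n k a b ↔ (Decomp n k a ∨ Decomp n k b → a = b) ∧ SameAction n k a b := by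
  constructor
  · rintro (⟨da, db, hM⟩ | ⟨-, rfl⟩)
    · exact ⟨fun hd => (hd.elim da db).elim, sameAction_iff.2 (mSets_eq_iff.1 hM)⟩
    · exact ⟨fun _ => rfl, sameAction_refl a⟩
  · rintro ⟨hd, hs⟩
    by_cases h : Decomp n k a ∨ Decomp n k b
    · exact Or.inr ⟨h, hd h⟩
    · rw [not_or] at h
      exact Or.inl ⟨h.1, h.2, mSets_eq_iff.2 (sameAction_iff.1 hs)⟩

theorem simRel_refl (a : IS n) : SimRel n k a a :=
  simRel_iff.2 ⟨fun _ => rfl, sameAction_refl a⟩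

theorem SimRel.symm {a b : IS n} (h : SimRel n k a b) : SimRel n k b a := by
  rw [simRel_iff] at h ⊢
  exact ⟨fun hd => (h.1 hd.symm).symm, h.2.symm⟩

theorem SimRel.trans {a b c : IS n} (h : SimRel n k a b) (h' : SimRel n k b c) :
    SimRel n k a c := by
  rw [simRel_iff] at h h' ⊢
  refine ⟨fun hd => ?_, h.2.trans h'.2⟩
  rcases hd with ha | hc
  · have hab := h.1 (Or.inl ha)
    exact hab.trans (h'.1 (Or.inl (hab ▸ ha)))
  · have hbc := h'.1 (Or.inr hc)
    exact (h.1 (Or.inr (hbc ▸ hc))).trans hbc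

theorem SimRel.eq_of_decomp {a b : IS n} (h : SimRel n k a b) (hb : Decomp n k b) : a = b :=
  (simRel_iff.1 h).1 (Or.inr hb)

def autGroup (n k : ℕ) : Subgroup (Perm (IS n)) where
  carrier := {φ | ∀ x y, φ (smul n k x y) = smul n k (φ x) (φ y)}
  one_mem' _ _ := rfl
  mul_mem' {φ ψ} hφ hψ x y := by
    rw [Perm.mul_apply, hψ, hφ]; rfl
  inv_mem' {φ} hφ x y := φ.injective <| by
    rw [hφ]; simp

def simClassGroup (n k : ℕ) : Subgroup (Perm (IS n)) where
  carrier := {π | ∀ a, SimRel n k (π a) a}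
  one_mem' := simRel_refl
  mul_mem' hπ hρ a := SimRel.trans (hπ _) (hρ a)
  inv_mem' {π} hπ a := by simpa using SimRel.symm (hπ (π⁻¹ a))

theorem mem_simClassGroup {π : Perm (IS n)} :
    π ∈ simClassGroup n k ↔ ∀ a, SimRel n k (π a) a := Iff.rfl

section Automorphism

variable {σ : Perm (IS n)} (hσ : σ ∈ autGroup n k)
include hσ

theorem map_smul (x y : IS n) : σ (smul n k x y) = smul n k (σ x) (σ y) := hσ x y

theorem map_bot : σ ⊥ = ⊥ := by
  obtain ⟨b, hb⟩ := σ.surjective ⊥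
  simpa [bot_smul, hb, smul_bot] using map_smul hσ ⊥ b

theorem map_ne_bot {a : IS n} (ha : a ≠ ⊥) : σ a ≠ ⊥ :=
  fun h => ha (σ.injective (h.trans (map_bot hσ).symm))

theorem decomp_map_iff {a : IS n} : Decomp n k (σ a) ↔ Decomp n k a := by
  constructor
  · rintro ⟨b, c, hbc⟩
    refine ⟨σ⁻¹ b, σ⁻¹ c, σ.injective ?_⟩
    simp [map_smul hσ, hbc]
  · rintro ⟨b, c, rfl⟩
    exact ⟨σ b, σ c, (map_smul hσ b c).symm⟩

theorem SameAction.map {a b : IS n} (h : SameAction n k a b) : SameAction n k (σ a) (σ b) := by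
  refine ⟨fun c => ?_, fun c => ?_⟩ <;> obtain ⟨c, rfl⟩ := σ.surjective c
  · rw [← map_smul hσ, ← map_smul hσ, h.1]
  · rw [← map_smul hσ, ← map_smul hσ, h.2]

theorem SimRel.map {a b : IS n} (h : SimRel n k a b) : SimRel n k (σ a) (σ b) := by
  rw [simRel_iff, decomp_map_iff hσ, decomp_map_iff hσ] at *
  exact ⟨fun hd => congrArg σ (h.1 hd), h.2.map hσ⟩

theorem conj_mem_simClassGroup {π : Perm (IS n)} (hπ : π ∈ simClassGroup n k) :
    σ * π * σ⁻¹ ∈ simClassGroup n k := fun a => by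
  simpa using SimRel.map hσ (hπ (σ⁻¹ a))

theorem IsPrimitiveIdempotent.map {a : IS n} (ha : IsPrimitiveIdempotent n k a) :
    IsPrimitiveIdempotent n k (σ a) := by
  obtain ⟨hne, hidem, hprim⟩ := ha
  refine ⟨map_ne_bot hσ hne, by rw [← map_smul hσ, hidem], fun b => ?_⟩
  obtain ⟨b, rfl⟩ := σ.surjective b
  rw [← map_smul hσ, ← map_smul hσ, ← map_bot hσ]
  exact (hprim b).imp (congrArg σ) (congrArg σ)

theorem exists_perms_map_single_eq {x₀ : Fin n} (hx₀ : (x₀ : ℕ) < k) :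
    ∃ p q : Perm (Fin n), ∀ s t, σ (single s t) = single (p s) (q t) := by
  obtain ⟨c, hc, hσc⟩ := ((isPrimitiveIdempotent_single hx₀).map hσ).exists_eq_single
  have hrow (t : Fin n) : ∃ v, σ (single x₀ t) = single c v := by
    refine eq_single_of_single_smul_eq hc (map_ne_bot hσ (single_ne_bot _ _)) ?_
    rw [← hσc, ← map_smul hσ, smul_single_single hx₀]
  have hcol (s : Fin n) : ∃ w, σ (single s x₀) = single w c := by
    refine eq_single_of_smul_single_eq hc (map_ne_bot hσ (single_ne_bot _ _)) ?_
    rw [← hσc, ← map_smul hσ, smul_single_single hx₀]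
  choose q hq using hrow
  choose p hp using hcol
  have hpq (s t : Fin n) : σ (single s t) = single (p s) (q t) := by
    rw [← smul_single_single hx₀, map_smul hσ, hp, hq, smul_single_single hc]
  have hp_inj : Function.Injective p := fun s s' h =>
    (single_eq_single_iff.1 (σ.injective (by rw [hp, hp, h] : σ (single s x₀) = _))).1
  have hq_inj : Function.Injective q := fun t t' h =>
    (single_eq_single_iff.1 (σ.injective (by rw [hq, hq, h] : σ (single x₀ t) = _))).2
  exact ⟨.ofBijective p (Finite.injective_iff_bijective.1 hp_inj),
    .ofBijective q (Finite.injective_iff_bijective.1 hq_inj), hpq⟩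

theorem lt_and_eq_of_map_single_eq {p q : Perm (Fin n)}
    (hpq : ∀ s t, σ (single s t) = single (p s) (q t)) {x : Fin n} (hx : (x : ℕ) < k) :
    (p x : ℕ) < k ∧ q x = p x := by
  suffices h : (q x : ℕ) < k ∧ q x = p x from ⟨h.2 ▸ h.1, h.2⟩
  by_contra h
  have := map_smul hσ (single x x) (single x x)
  rw [smul_single_single hx, hpq, smul_single_single_eq_bot h] at this
  exact single_ne_bot _ _ this

end Automorphism

theorem simClassGroup_le_autGroup : simClassGroup n k ≤ autGroup n k := fun π hπ x y => by
  have hπ' (a : IS n) := simRel_iff.1 (mem_simClassGroup.1 hπ a)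
  rw [(hπ' _).1 (Or.inr ⟨x, y, rfl⟩), (hπ' x).2.2 (π y), (hπ' y).2.1 x]

section FixingSingles

variable {σ : Perm (IS n)} (hσ : σ ∈ autGroup n k) (hfix : ∀ s t, σ (single s t) = single s t)
include hσ hfix

theorem map_eq_self_of_eq_bot_or {b : IS n} (hb : b = ⊥ ∨ ∃ s t, b = single s t) : σ b = b := by
  rcases hb with rfl | ⟨s, t, rfl⟩
  exacts [map_bot hσ, hfix s t]

theorem sameAction_map_of_map_single_eq (a : IS n) : SameAction n k (σ a) a := by
  rw [sameAction_iff_trans, eq_iff_forall_single_trans, eq_iff_forall_trans_single]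
  refine ⟨fun x => ?_, fun y => ?_⟩
  · rw [← smul_eq_trans, ← smul_eq_trans, ← map_eq_self_of_eq_bot_or hσ hfix
      ((single_smul_eq_bot_or x x a).imp_right fun ⟨y, hy⟩ => ⟨x, y, hy⟩), map_smul hσ, hfix]
  · change smul n k (σ a) (single y y) = smul n k a (single y y)
    rw [← map_eq_self_of_eq_bot_or hσ hfix
      ((smul_single_eq_bot_or a y y).imp_right fun ⟨s, hs⟩ => ⟨s, y, hs⟩), map_smul hσ, hfix]

theorem mem_simClassGroup_of_map_single_eq : σ ∈ simClassGroup n k := by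
  have hsame := sameAction_map_of_map_single_eq hσ hfix
  refine mem_simClassGroup.2 fun a => simRel_iff.2 ⟨fun hd => ?_, hsame a⟩
  obtain ⟨b, c, rfl⟩ : Decomp n k a := hd.elim (decomp_map_iff hσ).1 id
  rw [map_smul hσ, (hsame b).2, (hsame c).1]

end FixingSingles

abbrev PermA (n k : ℕ) := Perm {x : Fin n // (x : ℕ) < k}

abbrev PermB (n k : ℕ) := Perm {x : Fin n // ¬ (x : ℕ) < k}

abbrev bowtieHom (n k : ℕ) : PermA n k × PermB n k →* Perm (Fin n) :=
  Perm.subtypeCongrHom (fun x : Fin n => (x : ℕ) < k)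

theorem bowtie_apply_of_lt (g : PermA n k) (h : PermB n k) {x : Fin n} (hx : (x : ℕ) < k) :
    bowtie k g h x = g ⟨x, hx⟩ := Perm.subtypeCongr.left_apply g h hx

theorem bowtie_apply_of_not_lt (g : PermA n k) (h : PermB n k) {x : Fin n} (hx : ¬ (x : ℕ) < k) :
    bowtie k g h x = h ⟨x, hx⟩ := Perm.subtypeCongr.right_apply g h hx

theorem bowtie_lt_iff (g : PermA n k) (h : PermB n k) (x : Fin n) :
    (bowtie k g h x : ℕ) < k ↔ (x : ℕ) < k := by
  by_cases hx : (x : ℕ) < k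
  · simp [bowtie_apply_of_lt g h hx, hx, (g ⟨x, hx⟩).2]
  · simp [bowtie_apply_of_not_lt g h hx, hx, (h ⟨x, hx⟩).2]

theorem bowtie_trans_sandE_trans_symm (g : PermA n k) (h₁ h₂ : PermB n k) :
    ((bowtie k g h₂).toPEquiv.trans (sandE n k)).trans (bowtie k g h₁).symm.toPEquiv =
      sandE n k := by
  ext1 x
  rw [trans_toPEquiv_apply, toPEquiv_trans_apply]
  by_cases hx : (x : ℕ) < k
  · rw [sandE_apply_of_lt ((bowtie_lt_iff g h₂ x).2 hx), sandE_apply_of_lt hx, Option.map_some,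
      Option.some_inj, Equiv.symm_apply_eq, bowtie_apply_of_lt g h₁ hx, bowtie_apply_of_lt g h₂ hx]
  · rw [sandE_apply_of_not_lt (mt (bowtie_lt_iff g h₂ x).1 hx), sandE_apply_of_not_lt hx,
      Option.map_none]

theorem conjHom_mem_autGroup {p q : Perm (Fin n)}
    (h : (q.toPEquiv.trans (sandE n k)).trans p.symm.toPEquiv = sandE n k) :
    conjHom (p, q) ∈ autGroup n k := fun x y => by
  have h' (z : IS n) : q.toPEquiv.trans ((sandE n k).trans (p.symm.toPEquiv.trans z)) =
      (sandE n k).trans z := by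
    rw [← PEquiv.trans_assoc, ← PEquiv.trans_assoc, h]
  simp only [conjHom_apply, smul, PEquiv.trans_assoc, h']

def tauHom (n k : ℕ) : PermA n k × PermB n k × PermB n k →* Perm (IS n) :=
  conjHom.comp <| MonoidHom.mk' (fun G => (bowtie k G.1 G.2.1, bowtie k G.1 G.2.2)) fun G H =>
    Prod.ext (map_mul (bowtieHom n k) (G.1, G.2.1) (H.1, H.2.1))
      (map_mul (bowtieHom n k) (G.1, G.2.2) (H.1, H.2.2))

theorem tauHom_apply (g : PermA n k) (h₁ h₂ : PermB n k) (a : IS n) :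
    tauHom n k (g, h₁, h₂) a = tauMap k g h₁ h₂ a := rfl

theorem tauHom_eq_conjHom (g : PermA n k) (h₁ h₂ : PermB n k) :
    tauHom n k (g, h₁, h₂) = conjHom (bowtie k g h₁, bowtie k g h₂) := rfl

theorem tauHom_mem_autGroup (G : PermA n k × PermB n k × PermB n k) :
    tauHom n k G ∈ autGroup n k :=
  conjHom_mem_autGroup (bowtie_trans_sandE_trans_symm G.1 G.2.1 G.2.2)

theorem eq_one_of_tauHom_single (G : PermA n k × PermB n k × PermB n k)
    (hG : ∀ x y : Fin n, tauHom n k G (single x y) = single x y) : G = 1 := by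
  obtain ⟨g, h₁, h₂⟩ := G
  have hfix (x y : Fin n) := single_eq_single_iff.1 ((conjHom_single _ _ x y).symm.trans (hG x y))
  have h₁' : bowtieHom n k (g, h₁) = 1 := Equiv.ext fun x => (hfix x x).1
  have h₂' : bowtieHom n k (g, h₂) = 1 := Equiv.ext fun x => (hfix x x).2
  rw [← map_one (bowtieHom n k)] at h₁' h₂'
  obtain ⟨rfl, rfl⟩ := Prod.mk.inj (Perm.subtypeCongrHom_injective _ h₁')
  obtain ⟨-, rfl⟩ := Prod.mk.inj (Perm.subtypeCongrHom_injective _ h₂')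
  rfl

theorem tauHom_injective : Function.Injective (tauHom n k) :=
  (injective_iff_map_eq_one _).2 fun G hG => eq_one_of_tauHom_single G fun x y => by rw [hG]; rfl

theorem lt_iff_of_mapsTo {p : Perm (Fin n)} (hp : ∀ x : Fin n, (x : ℕ) < k → (p x : ℕ) < k)
    (x : Fin n) : (p x : ℕ) < k ↔ (x : ℕ) < k :=
  ⟨fun h => by simpa using Perm.perm_symm_on_of_perm_on_finite hp h, hp x⟩

theorem exists_tauHom_eq {p q : Perm (Fin n)} (hp : ∀ x : Fin n, (x : ℕ) < k → (p x : ℕ) < k)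
    (hpq : ∀ x : Fin n, (x : ℕ) < k → q x = p x) : ∃ G, tauHom n k G = conjHom (p, q) := by
  have hp' := lt_iff_of_mapsTo hp
  have hq' := lt_iff_of_mapsTo fun x hx => hpq x hx ▸ hp x hx
  refine ⟨(p.subtypePerm hp', p.subtypePerm fun x => not_congr (hp' x),
    q.subtypePerm fun x => not_congr (hq' x)), ?_⟩
  rw [tauHom_eq_conjHom]
  congr 2 <;> ext x <;> by_cases hx : (x : ℕ) < k <;>
    simp [bowtie_apply_of_lt, bowtie_apply_of_not_lt, hx, hpq]

theorem exists_tauHom_inv_mul_mem {x₀ : Fin n} (hx₀ : (x₀ : ℕ) < k) {σ : Perm (IS n)}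
    (hσ : σ ∈ autGroup n k) : ∃ G, (tauHom n k G)⁻¹ * σ ∈ simClassGroup n k := by
  obtain ⟨p, q, hpq⟩ := exists_perms_map_single_eq hσ hx₀
  obtain ⟨G, hG⟩ := exists_tauHom_eq (fun x hx => (lt_and_eq_of_map_single_eq hσ hpq hx).1)
    (fun x hx => (lt_and_eq_of_map_single_eq hσ hpq hx).2)
  refine ⟨G, mem_simClassGroup_of_map_single_eq
    (mul_mem (inv_mem (tauHom_mem_autGroup G)) hσ) fun s t => ?_⟩
  rw [Perm.mul_apply, hpq, hG, ← conjHom_single]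
  exact (conjHom (p, q)).symm_apply_apply _

theorem simClassGroup_inf_range_tauHom {x₀ : Fin n} (hx₀ : (x₀ : ℕ) < k) :
    simClassGroup n k ⊓ (tauHom n k).range = ⊥ := by
  refine (Subgroup.eq_bot_iff_forall _).2 ?_
  rintro _ ⟨hN, G, rfl⟩
  rw [eq_one_of_tauHom_single G fun s t =>
    SimRel.eq_of_decomp (mem_simClassGroup.1 hN _) (decomp_single hx₀ s t), map_one]

end Sandwich

open Sandwich in
/-- Main theorem: with `𝒩` the subgroup of `Aut(IS_n, *)` of
automorphisms preserving each `∼`-class and `ℋ` the image of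
`S(A) × S(Ā) × S(Ā)` under `(g,h₁,h₂) ↦ τ_(g,h₁,h₂)`, the subgroup `𝒩` is normal
in `Aut(IS_n, *)`, `𝒩 ∩ ℋ` is trivial, `ℋ · 𝒩 = Aut(IS_n, *)`, and
`Aut(IS_n, *) ≅ 𝒩 ⋊ (S(A) × S(Ā) × S(Ā))`. -/
theorem main_theorem (n k : ℕ) (hk : 1 ≤ k) (hkn : k ≤ n) :
    ∃ Aut NN HH : Subgroup (Equiv.Perm (IS n)),
      (∀ φ : Equiv.Perm (IS n),
        φ ∈ Aut ↔ ∀ x y : IS n, φ (smul n k x y) = smul n k (φ x) (φ y)) ∧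
      (∀ π : Equiv.Perm (IS n), π ∈ NN ↔ ∀ a, SimRel n k (π a) a) ∧
      (∃ Φ : (Perm {x : Fin n // (x : ℕ) < k} × Perm {x : Fin n // ¬ (x : ℕ) < k} ×
               Perm {x : Fin n // ¬ (x : ℕ) < k}) →* Equiv.Perm (IS n),
        Function.Injective Φ ∧
        (∀ (g : Perm {x : Fin n // (x : ℕ) < k})
           (h₁ h₂ : Perm {x : Fin n // ¬ (x : ℕ) < k}) (a : IS n),
             Φ (g, h₁, h₂) a = tauMap k g h₁ h₂ a) ∧
        HH = Φ.range) ∧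
      NN ≤ Aut ∧ HH ≤ Aut ∧
      (∀ σ ∈ Aut, ∀ π ∈ NN, σ * π * σ⁻¹ ∈ NN) ∧
      NN ⊓ HH = ⊥ ∧
      (∀ σ ∈ Aut, ∃ τ ∈ HH, ∃ π ∈ NN, σ = τ * π) ∧
      ∃ act : (Perm {x : Fin n // (x : ℕ) < k} × Perm {x : Fin n // ¬ (x : ℕ) < k} ×
                Perm {x : Fin n // ¬ (x : ℕ) < k}) →* MulAut NN,
        Nonempty ((NN ⋊[act] (Perm {x : Fin n // (x : ℕ) < k} ×
          Perm {x : Fin n // ¬ (x : ℕ) < k} ×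
          Perm {x : Fin n // ¬ (x : ℕ) < k})) ≃* Aut) := by
  let x₀ : Fin n := ⟨0, Nat.lt_of_lt_of_le hk hkn⟩
  have hx₀ : (x₀ : ℕ) < k := hk
  have hnorm : ∀ σ ∈ autGroup n k, ∀ π ∈ simClassGroup n k, σ * π * σ⁻¹ ∈ simClassGroup n k :=
    fun σ hσ π hπ => conj_mem_simClassGroup hσ hπ
  have hgen (σ) (hσ : σ ∈ autGroup n k) := exists_tauHom_inv_mul_mem hx₀ hσ
  refine ⟨autGroup n k, simClassGroup n k, (tauHom n k).range, fun _ => Iff.rfl, fun _ => Iff.rfl,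
    ⟨tauHom n k, tauHom_injective, tauHom_apply, rfl⟩, simClassGroup_le_autGroup,
    ?_, hnorm, simClassGroup_inf_range_tauHom hx₀, fun σ hσ => ?_,
    Subgroup.nonempty_mulEquiv_semidirectProduct _ tauHom_injective simClassGroup_le_autGroup
      tauHom_mem_autGroup hnorm (simClassGroup_inf_range_tauHom hx₀) hgen⟩
  · rintro _ ⟨G, rfl⟩
    exact tauHom_mem_autGroup G
  · obtain ⟨G, hG⟩ := hgen σ hσ
    exact ⟨tauHom n k G, ⟨G, rfl⟩, _, hG, (mul_inv_cancel_left _ _).symm⟩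
end
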